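/- Let D̄ be a distribution on [n] which is piecewise constant on each interval of a fixed partition I_1,...,I_ℓ of [n] into intervals (i.e., D̄ is I-flat). If D̄ is ε-close in total variation distance to some monotone non-increasing distribution, then D̄ is ε-close to a monotone non-increasing distribution that is itself piecewise constant on the same partition. -/

import Mathlib

open Finset

noncomputable def tv {n : ℕ} (D P : Fin n → ℝ) : ℝ := (∑ i, |D i - P i|) / 2

def IsDist {n : ℕ} (D : Fin n → ℝ) : Prop := (∀ i, 0 ≤ D i) ∧ ∑ i, D i = 1

/-- `D` is piecewise constant on the fibers of `c` (the interval partition). -/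
def IsFlat {n ℓ : ℕ} (c : Fin n → Fin ℓ) (D : Fin n → ℝ) : Prop :=
  ∀ i j : Fin n, c i = c j → D i = D j

/-
Replace a non-increasing `P` by its flattening `P̄`, the average of `P` over each interval.
Averaging over a block of the partition preserves nonnegativity and mass, and since every point
of an earlier block lies before every point of a later one, the average of an antitone `P` over
the earlier block dominates its average over the later one, so `P̄` is antitone. Flattening is
linear, fixes the flat `D̄` and does not increase the `ℓ¹` norm (`|average| ≤ average of |·|`),
hence `‖D̄ - P̄‖₁ = ‖flatten (D̄ - P)‖₁ ≤ ‖D̄ - P‖₁`.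
-/

open scoped BigOperators

section Flatten

variable {α β : Type*} [Fintype α] [DecidableEq β]

noncomputable def flatten (c : α → β) (P : α → ℝ) (i : α) : ℝ :=
  𝔼 j ∈ {j | c j = c i}, P j

variable {c : α → β}

lemma nonempty_fiber (i : α) : ({j | c j = c i} : Finset α).Nonempty :=
  ⟨i, by simp⟩

lemma flatten_congr (P : α → ℝ) {i j : α} (h : c i = c j) :
    flatten c P i = flatten c P j := by
  simp only [flatten, h]

lemma flatten_nonneg {P : α → ℝ} (hP : ∀ i, 0 ≤ P i) (i : α) : 0 ≤ flatten c P i :=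
  expect_nonneg fun j _ => hP j

lemma flatten_sub (P Q : α → ℝ) : flatten c (P - Q) = flatten c P - flatten c Q :=
  funext fun _ => expect_sub_distrib _ _ _

lemma flatten_eq_self {P : α → ℝ} (hP : ∀ i j, c i = c j → P i = P j) :
    flatten c P = P := by
  funext i
  calc flatten c P i = 𝔼 _j ∈ {j | c j = c i}, P i :=
        expect_congr rfl fun j hj => hP j i (mem_filter.1 hj).2
    _ = P i := expect_const (nonempty_fiber i) _

lemma abs_flatten_le (P : α → ℝ) (i : α) : |flatten c P i| ≤ flatten c (fun j => |P j|) i :=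
  abs_expect_le _ _

lemma sum_flatten (P : α → ℝ) : ∑ i, flatten c P i = ∑ i, P i := by
  have hmaps : ∀ i ∈ (univ : Finset α), c i ∈ univ.image c :=
    fun i _ => mem_image_of_mem c (mem_univ i)
  rw [← sum_fiberwise_of_maps_to hmaps, ← sum_fiberwise_of_maps_to hmaps]
  refine sum_congr rfl fun b _ => ?_
  calc ∑ i ∈ {i | c i = b}, flatten c P i
        = ∑ _i ∈ {i | c i = b}, 𝔼 j ∈ {j | c j = b}, P j :=
        sum_congr rfl fun i hi => by rw [flatten, (mem_filter.1 hi).2]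
    _ = ∑ j ∈ {j | c j = b}, P j := by rw [sum_const, card_smul_expect]

lemma sum_abs_flatten_le (P : α → ℝ) : ∑ i, |flatten c P i| ≤ ∑ i, |P i| :=
  calc ∑ i, |flatten c P i| ≤ ∑ i, flatten c (fun j => |P j|) i :=
        sum_le_sum fun i _ => abs_flatten_le P i
    _ = ∑ i, |P i| := sum_flatten _

lemma sum_abs_sub_flatten_le {D : α → ℝ} (hD : ∀ i j, c i = c j → D i = D j) (P : α → ℝ) :
    ∑ i, |D i - flatten c P i| ≤ ∑ i, |D i - P i| := by
  conv_lhs => rw [← flatten_eq_self hD]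
  simpa only [flatten_sub, Pi.sub_apply] using sum_abs_flatten_le (c := c) (D - P)

lemma antitone_flatten [LinearOrder α] [LinearOrder β] (hc : Monotone c) {P : α → ℝ}
    (hP : Antitone P) : Antitone (flatten c P) := by
  intro i j hij
  rcases (hc hij).eq_or_lt with hcij | hcij
  · exact (flatten_congr P hcij).ge
  -- Every point of the block of `i` precedes every point of the block of `j`.
  have hP_le : ∀ a ∈ ({a | c a = c i} : Finset α), flatten c P j ≤ P a :=
    fun a ha => expect_le (nonempty_fiber j) fun b hb => hP <| le_of_lt <| hc.reflect_lt <| by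
      rwa [(mem_filter.1 ha).2, (mem_filter.1 hb).2]
  exact le_expect (nonempty_fiber i) hP_le

end Flatten

lemma isDist_flatten {n : ℕ} {β : Type*} [DecidableEq β] {c : Fin n → β} {P : Fin n → ℝ}
    (hP : IsDist P) : IsDist (flatten c P) :=
  ⟨flatten_nonneg hP.1, (sum_flatten P).trans hP.2⟩

lemma tv_flatten_le {n : ℕ} {β : Type*} [DecidableEq β] {c : Fin n → β} {D : Fin n → ℝ}
    (hD : ∀ i j, c i = c j → D i = D j) (P : Fin n → ℝ) : tv D (flatten c P) ≤ tv D P :=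
  div_le_div_of_nonneg_right (sum_abs_sub_flatten_le hD P) zero_le_two

theorem flat_close_monotone_iff_close_flat_monotone_general {n ℓ : ℕ} (c : Fin n → Fin ℓ)
    (hmono : Monotone c)
    (Dbar : Fin n → ℝ) (ε : ℝ)
    (hflat : IsFlat c Dbar)
    (hclose : ∃ P : Fin n → ℝ, IsDist P ∧ Antitone P ∧ tv Dbar P ≤ ε) :
    ∃ P : Fin n → ℝ, IsDist P ∧ Antitone P ∧ IsFlat c P ∧ tv Dbar P ≤ ε := by
  obtain ⟨P, hPdist, hPanti, hPtv⟩ := hclose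
  exact ⟨flatten c P, isDist_flatten hPdist, antitone_flatten hmono hPanti,
    fun i j h => flatten_congr P h, (tv_flatten_le hflat P).trans hPtv⟩

theorem flat_close_monotone_iff_close_flat_monotone {n ℓ : ℕ} (c : Fin n → Fin ℓ)
    (hmono : Monotone c) (hsurj : Function.Surjective c)
    (Dbar : Fin n → ℝ) (ε : ℝ)
    (hD : IsDist Dbar) (hflat : IsFlat c Dbar)
    (hclose : ∃ P : Fin n → ℝ, IsDist P ∧ Antitone P ∧ tv Dbar P ≤ ε) :
    ∃ P : Fin n → ℝ, IsDist P ∧ Antitone P ∧ IsFlat c P ∧ tv Dbar P ≤ ε :=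
  flat_close_monotone_iff_close_flat_monotone_general c hmono Dbar ε hflat hclose
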